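/- arXiv:2106.05089 — 3 statements merged into one kernel-verified Lean document; each statement's English description precedes it below -/
import Mathlib

section
/- Let $T \in \mathbb{R}$ and let $c$ be a positive smooth function on $(T,+\infty)$ such that $t \mapsto c(t)e^{-t}$ is nonincreasing and $\int_T^{+\infty} c(t)e^{-t}\,dt < +\infty$. Then for every $t \in (T,+\infty)$ one has $\left(\int_T^t c(t_1)e^{-t_1}\,dt_1\right)^2 > c(t)e^{-t}\int_T^t\left(\int_T^{t_2} c(t_1)e^{-t_1}\,dt_1\right)dt_2$. -/
open Real Set intervalIntegral MeasureTheory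

theorem stmt0 (T : ℝ) (c : ℝ → ℝ)
    (hc_smooth : ContDiffOn ℝ (⊤ : ℕ∞) c (Set.Ioi T))
    (hc_pos : ∀ t ∈ Set.Ioi T, 0 < c t)
    (hc_anti : AntitoneOn (fun t => c t * Real.exp (-t)) (Set.Ioi T))
    (hc_int : MeasureTheory.IntegrableOn (fun t => c t * Real.exp (-t)) (Set.Ioi T)) :
    ∀ t ∈ Set.Ioi T,
      (∫ t₁ in T..t, c t₁ * Real.exp (-t₁)) ^ 2 >
        c t * Real.exp (-t) *
          ∫ t₂ in T..t, (∫ t₁ in T..t₂, c t₁ * Real.exp (-t₁)) := by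
  set g : ℝ → ℝ := fun s => c s * Real.exp (-s) with hg
  set F : ℝ → ℝ := fun s => ∫ t₁ in T..s, g t₁ with hF
  -- g continuous on Ioi T
  have hgcont : ContinuousOn g (Set.Ioi T) := by
    apply (hc_smooth.continuousOn).mul
    exact ((Real.continuous_exp.comp continuous_neg).continuousOn)
  have hgpos : ∀ s ∈ Set.Ioi T, 0 < g s := fun s hs =>
    mul_pos (hc_pos s hs) (Real.exp_pos _)
  -- interval integrability of g
  have hgii : ∀ u, T ≤ u → IntervalIntegrable g volume T u := by
    intro u hu
    rw [intervalIntegrable_iff_integrableOn_Ioc_of_le hu]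
    exact hc_int.mono_set Set.Ioc_subset_Ioi_self
  intro t ht
  have hTt : T < t := ht
  -- F is positive on Ioi T
  have hFpos : ∀ s ∈ Set.Ioi T, 0 < F s := by
    intro s hs
    exact intervalIntegral.intervalIntegral_pos_of_pos_on (hgii s hs.le)
      (fun x hx => hgpos x hx.1) hs
  -- F continuous on Icc T t
  have hgint_Icc : IntegrableOn g (Set.Icc T t) := by
    have := hc_int.mono_set (Set.Ioc_subset_Ioi_self : Set.Ioc T t ⊆ Set.Ioi T)
    exact this.congr_set_ae Ioc_ae_eq_Icc.symm |>.congr_set_ae (by rfl)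
  have hFcont : ContinuousOn F (Set.Icc T t) := by
    have : Set.uIcc T t = Set.Icc T t := Set.uIcc_of_le hTt.le
    rw [← this] at hgint_Icc ⊢
    exact intervalIntegral.continuousOn_primitive_interval hgint_Icc
  -- derivative of F on Ioo T t
  have hFderiv : ∀ s ∈ Set.Ioo T t, HasDerivAt F (g s) s := by
    intro s hs
    exact intervalIntegral.integral_hasDerivAt_right (hgii s hs.1.le)
      (hgcont.stronglyMeasurableAtFilter isOpen_Ioi s hs.1)
      (hgcont.continuousAt (isOpen_Ioi.mem_nhds hs.1))
  -- H = F^2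
  have hHcont : ContinuousOn (fun s => F s ^ 2) (Set.Icc T t) := hFcont.pow 2
  have hHderiv : ∀ s ∈ Set.Ioo T t, HasDerivAt (fun s => F s ^ 2) (2 * F s * g s) s := by
    intro s hs
    have := (hFderiv s hs).fun_pow 2
    simpa [mul_comm, mul_assoc, mul_left_comm] using this
  have hFii : IntervalIntegrable F volume T t := hFcont.intervalIntegrable_of_Icc hTt.le
  have hφii : IntervalIntegrable (fun s => 2 * F s * g s) volume T t := by
    have := (hgii t hTt.le).continuousOn_mul (g := fun s => 2 * F s)
      (by rw [Set.uIcc_of_le hTt.le]; exact (continuousOn_const.mul hFcont))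
    simpa using this
  have hFT : F T = 0 := by simp [hF]
  have hkey : F t ^ 2 = ∫ s in T..t, 2 * F s * g s := by
    have := intervalIntegral.integral_eq_sub_of_hasDerivAt_of_le hTt.le hHcont hHderiv hφii
    rw [this, hFT]; ring
  -- monotone comparison
  have hmono : ∫ s in T..t, 2 * g t * F s ≤ ∫ s in T..t, 2 * F s * g s := by
    rw [intervalIntegral.integral_of_le hTt.le, intervalIntegral.integral_of_le hTt.le]
    apply MeasureTheory.setIntegral_mono_on
    · have : IntegrableOn (fun s => 2 * g t * F s) (Set.Ioc T t) := by
        have := ((_root_.intervalIntegrable_const (μ := volume) (a := T) (b := t) (c := 2 * g t)).mul_continuousOn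
          (g := F) (by rw [Set.uIcc_of_le hTt.le]; exact hFcont))
        rw [intervalIntegrable_iff_integrableOn_Ioc_of_le hTt.le] at this
        exact this
      exact this
    · rw [intervalIntegrable_iff_integrableOn_Ioc_of_le hTt.le] at hφii
      exact hφii
    · exact measurableSet_Ioc
    · intro s hs
      have hsT : s ∈ Set.Ioi T := hs.1
      have hgle : g t ≤ g s := hc_anti hsT ht hs.2
      have hFnn : 0 ≤ F s := (hFpos s hsT).le
      nlinarith
  have hIF : (0:ℝ) < ∫ s in T..t, F s := by
    apply intervalIntegral.intervalIntegral_pos_of_pos_on hFii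
      (fun x hx => hFpos x hx.1) hTt
  have hconst : ∫ s in T..t, 2 * g t * F s = 2 * g t * ∫ s in T..t, F s := by
    rw [← intervalIntegral.integral_const_mul]
  have hgt : 0 < g t := hgpos t ht
  calc c t * Real.exp (-t) * ∫ t₂ in T..t, F t₂ = g t * ∫ s in T..t, F s := rfl
    _ < 2 * g t * ∫ s in T..t, F s := by nlinarith
    _ = ∫ s in T..t, 2 * g t * F s := hconst.symm
    _ ≤ ∫ s in T..t, 2 * F s * g s := hmono
    _ = F t ^ 2 := hkey.symm
end

section
/- Let $T \in \mathbb{R}$, let $c$ be a positive smooth function on $(T,+\infty)$ with $c(t)e^{-t}$ nonincreasing and $\int_T^{+\infty} c(t)e^{-t}\,dt < +\infty$, and define $u(t) = -\log\left(\int_T^t c(t_1)e^{-t_1}\,dt_1\right)$ and $s(t) = \frac{\int_T^t\left(\int_T^{t_2} c(t_1)e^{-t_1}\,dt_1\right)dt_2}{\int_T^t c(t_1)e^{-t_1}\,dt_1}$. Then $u''(t)s(t) - s''(t) > 0$ and $\left(s(t) + \frac{s'(t)^2}{u''(t)s(t)-s''(t)}\right)e^{u(t)-t} = \frac{1}{c(t)}$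 for all $t \in (T,+\infty)$. -/
open Set MeasureTheory intervalIntegral Filter

theorem stmt2 (T : ℝ) (c : ℝ → ℝ)
    (hc_smooth : ContDiffOn ℝ (⊤ : ℕ∞) c (Set.Ioi T))
    (hc_pos : ∀ t ∈ Set.Ioi T, 0 < c t)
    (hc_anti : AntitoneOn (fun t => c t * Real.exp (-t)) (Set.Ioi T))
    (hc_int : MeasureTheory.IntegrableOn (fun t => c t * Real.exp (-t)) (Set.Ioi T))
    (u s : ℝ → ℝ)
    (hu : ∀ t ∈ Set.Ioi T, u t = -Real.log (∫ t₁ in T..t, c t₁ * Real.exp (-t₁)))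
    (hs : ∀ t ∈ Set.Ioi T, s t =
      (∫ t₂ in T..t, (∫ t₁ in T..t₂, c t₁ * Real.exp (-t₁))) /
        (∫ t₁ in T..t, c t₁ * Real.exp (-t₁))) :
    ∀ t ∈ Set.Ioi T,
      0 < deriv (deriv u) t * s t - deriv (deriv s) t ∧
      (s t + (deriv s t) ^ 2 / (deriv (deriv u) t * s t - deriv (deriv s) t)) *
          Real.exp (u t - t) = 1 / c t := by
  have hopen : IsOpen (Ioi T) := isOpen_Ioi
  set g : ℝ → ℝ := fun x => c x * Real.exp (-x) with hgdef
  set G : ℝ → ℝ := fun x => ∫ t₁ in T..x, g t₁ with hGdef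
  set H : ℝ → ℝ := fun x => ∫ t₂ in T..x, G t₂ with hHdef
  have hu' : ∀ t ∈ Ioi T, u t = -Real.log (G t) := hu
  have hs' : ∀ t ∈ Ioi T, s t = H t / G t := hs
  have hgpos : ∀ x ∈ Ioi T, 0 < g x := fun x hx => mul_pos (hc_pos x hx) (Real.exp_pos _)
  have hgcont : ContinuousOn g (Ioi T) :=
    (hc_smooth.continuousOn).mul ((Real.continuous_exp.comp continuous_neg).continuousOn)
  have hgint : ∀ a b, T ≤ a → a ≤ b → IntervalIntegrable g volume a b := by
    intro a b ha hab
    rw [intervalIntegrable_iff_integrableOn_Ioc_of_le hab]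
    exact hc_int.mono_set (fun x hx => lt_of_le_of_lt ha hx.1)
  have hG' : ∀ x ∈ Ioi T, HasDerivAt G (g x) x := fun x hx =>
    integral_hasDerivAt_right (hgint T x le_rfl (le_of_lt hx))
      (hgcont.stronglyMeasurableAtFilter hopen x hx)
      (hgcont.continuousAt (hopen.mem_nhds hx))
  have hGsub : ∀ a b, T ≤ a → a ≤ b → G b - G a = ∫ x in a..b, g x := by
    intro a b ha hab
    exact integral_interval_sub_left (hgint T b le_rfl (ha.trans hab))
      (hgint T a le_rfl ha)
  have hint_nonneg : ∀ a b, T ≤ a → a ≤ b → 0 ≤ ∫ x in a..b, g x := by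
    intro a b ha hab
    rw [intervalIntegral.integral_of_le hab]
    exact setIntegral_nonneg measurableSet_Ioc fun x hx => (hgpos x (lt_of_le_of_lt ha hx.1)).le
  have hGmono : MonotoneOn G (Ici T) := by
    intro a ha b hb hab
    have h1 := hint_nonneg a b ha hab
    have h2 := hGsub a b ha hab
    linarith
  have hGint : ∀ a b, T ≤ a → a ≤ b → IntervalIntegrable G volume a b := by
    intro a b ha hab
    refine (hGmono.mono ?_).intervalIntegrable
    rw [uIcc_of_le hab]
    exact fun x hx => le_trans ha hx.1
  have hGcont : ContinuousOn G (Ioi T) := fun x hx =>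
    ((hG' x hx).continuousAt.continuousWithinAt)
  have hH' : ∀ x ∈ Ioi T, HasDerivAt H (G x) x := fun x hx =>
    integral_hasDerivAt_right (hGint T x le_rfl (le_of_lt hx))
      (hGcont.stronglyMeasurableAtFilter hopen x hx)
      (hGcont.continuousAt (hopen.mem_nhds hx))
  have hGpos : ∀ x ∈ Ioi T, 0 < G x := fun x hx =>
    intervalIntegral_pos_of_pos_on (hgint T x le_rfl (le_of_lt hx))
      (fun y hy => hgpos y hy.1) hx
  have hGnn : ∀ x, T ≤ x → 0 ≤ G x := by
    intro x hx
    rcases eq_or_lt_of_le hx with h | h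
    · simp [hGdef, ← h]
    · exact (hGpos x h).le
  have hgd : ∀ x ∈ Ioi T, HasDerivAt g (deriv g x) x := by
    intro x hx
    have hc : DifferentiableAt ℝ c x :=
      (hc_smooth.contDiffAt (hopen.mem_nhds hx)).differentiableAt (by simp)
    have : DifferentiableAt ℝ g x :=
      hc.mul ((Real.differentiable_exp.comp differentiable_neg) x)
    exact this.hasDerivAt
  -- first derivative formulas
  have hueq : ∀ x ∈ Ioi T, deriv u x = -(g x / G x) := by
    intro x hx
    have h1 : u =ᶠ[nhds x] fun y => -Real.log (G y) :=
      eventually_of_mem (hopen.mem_nhds hx) hu'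
    rw [h1.deriv_eq]
    exact (((hG' x hx).log (hGpos x hx).ne').neg).deriv
  have hseq : ∀ x ∈ Ioi T, deriv s x = (G x * G x - H x * g x) / G x ^ 2 := by
    intro x hx
    have h1 : s =ᶠ[nhds x] fun y => H y / G y :=
      eventually_of_mem (hopen.mem_nhds hx) hs'
    rw [h1.deriv_eq]
    exact ((hH' x hx).div (hG' x hx) (hGpos x hx).ne').deriv
  intro t ht
  have hAne : G t ≠ 0 := (hGpos t ht).ne'
  -- second derivative of u
  have hu2 : deriv (deriv u) t = (g t * g t - deriv g t * G t) / G t ^ 2 := by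
    have h1 : deriv u =ᶠ[nhds t] fun x => -(g x / G x) :=
      eventually_of_mem (hopen.mem_nhds ht) hueq
    rw [h1.deriv_eq]
    have h2 := (((hgd t ht).div (hG' t ht) hAne)).neg
    rw [show (fun x => -(g x / G x)) = -(g / G) from rfl, h2.deriv]
    ring
  -- second derivative of s
  have hs2 : deriv (deriv s) t =
      (2 * H t * g t ^ 2 - G t ^ 2 * g t - G t * H t * deriv g t) / G t ^ 3 := by
    have h1 : deriv s =ᶠ[nhds t] fun x => (G x * G x - H x * g x) / G x ^ 2 :=
      eventually_of_mem (hopen.mem_nhds ht) hseq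
    rw [h1.deriv_eq]
    have h2 := (((hG' t ht).mul (hG' t ht)).sub ((hH' t ht).mul (hgd t ht))).div
      ((hG' t ht).pow 2) (pow_ne_zero 2 hAne)
    rw [show (fun x => (G x * G x - H x * g x) / G x ^ 2) = (G * G - H * g) / G ^ 2 from rfl,
      h2.deriv]
    simp only [Pi.pow_apply, Pi.sub_apply, Pi.mul_apply]
    field_simp
    ring
  -- Key inequality : H t * g t < G t ^ 2
  set T' : ℝ := (T + t) / 2 with hT'def
  have hT'1 : T < T' := by simp only [hT'def]; linarith [ht.out]
  have hT'2 : T' < t := by simp only [hT'def]; linarith [ht.out]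
  have hGT'pos : 0 < G T' := hGpos T' hT'1
  have hGT'lt : G T' < G t := by
    have h1 : 0 < ∫ x in T'..t, g x :=
      intervalIntegral_pos_of_pos_on (hgint T' t hT'1.le hT'2.le)
        (fun y hy => hgpos y (hT'1.trans hy.1)) hT'2
    have h2 := hGsub T' t hT'1.le hT'2.le
    linarith
  have hsplit : H t = (∫ x in T..T', G x) + ∫ x in T'..t, G x :=
    (integral_add_adjacent_intervals (hGint T T' le_rfl hT'1.le)
      (hGint T' t hT'1.le hT'2.le)).symm
  have h1 : (∫ x in T..T', G x) ≤ G T' * (T' - T) := by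
    rw [intervalIntegral.integral_of_le hT'1.le]
    have := setIntegral_mono_on (μ := volume) (s := Ioc T T') (f := G) (g := fun _ => G T')
      ((intervalIntegrable_iff_integrableOn_Ioc_of_le hT'1.le).mp (hGint T T' le_rfl hT'1.le))
      (integrableOn_const measure_Ioc_lt_top.ne)
      measurableSet_Ioc
      (fun x hx => hGmono hx.1.le (le_of_lt hT'1) hx.2)
    calc (∫ x in Ioc T T', G x) ≤ ∫ _ in Ioc T T', G T' := this
      _ = G T' * (T' - T) := by
          rw [setIntegral_const, Real.volume_real_Ioc_of_le hT'1.le, smul_eq_mul]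
          ring
  have h2 : g T' * (T' - T) ≤ G T' := by
    have hGT' : G T' = ∫ x in Ioc T T', g x := by
      rw [hGdef]; exact intervalIntegral.integral_of_le hT'1.le
    rw [hGT']
    have := setIntegral_mono_on (μ := volume) (s := Ioc T T') (f := fun _ => g T') (g := g)
      (integrableOn_const measure_Ioc_lt_top.ne)
      ((intervalIntegrable_iff_integrableOn_Ioc_of_le hT'1.le).mp (hgint T T' le_rfl hT'1.le))
      measurableSet_Ioc
      (fun x hx => hc_anti hx.1 hT'1 hx.2)
    calc g T' * (T' - T) = ∫ _ in Ioc T T', g T' := by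
          rw [setIntegral_const, Real.volume_real_Ioc_of_le hT'1.le, smul_eq_mul]
          ring
      _ ≤ ∫ x in Ioc T T', g x := this
  have hGgInt : IntervalIntegrable (fun x => G x * g x) volume T' t := by
    apply ContinuousOn.intervalIntegrable
    rw [uIcc_of_le hT'2.le]
    have hsub : Icc T' t ⊆ Ioi T := fun x hx => lt_of_lt_of_le hT'1 hx.1
    exact (hGcont.mono hsub).mul (hgcont.mono hsub)
  have h3 : (∫ x in T'..t, G x) * g t ≤ ∫ x in T'..t, G x * g x := by
    rw [← intervalIntegral.integral_mul_const]
    apply intervalIntegral.integral_mono_on hT'2.le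
      ((hGint T' t hT'1.le hT'2.le).mul_const _) hGgInt
    intro x hx
    have hxI : x ∈ Ioi T := lt_of_lt_of_le hT'1 hx.1
    exact mul_le_mul_of_nonneg_left (hc_anti hxI ht hx.2) (hGnn x hxI.le)
  have h4 : (∫ x in T'..t, G x * g x) = G t ^ 2 / 2 - G T' ^ 2 / 2 := by
    apply intervalIntegral.integral_eq_sub_of_hasDerivAt (f := fun y => G y ^ 2 / 2)
    · intro x hx
      rw [uIcc_of_le hT'2.le] at hx
      have hxI : x ∈ Ioi T := lt_of_lt_of_le hT'1 hx.1
      have := ((hG' x hxI).pow 2).div_const 2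
      refine this.congr_deriv ?_
      push_cast
      ring
    · exact hGgInt
  have hHnn : 0 ≤ H t := by
    show (0:ℝ) ≤ ∫ x in T..t, G x
    rw [intervalIntegral.integral_of_le (le_of_lt ht)]
    exact setIntegral_nonneg measurableSet_Ioc fun x hx => hGnn x hx.1.le
  have hgt : 0 < g t := hgpos t ht
  have hgT' : g t ≤ g T' := hc_anti hT'1 ht hT'2.le
  have K : H t * g t < G t ^ 2 := by
    have e1 : g t * (∫ x in T..T', G x) ≤ g t * (G T' * (T' - T)) := by
      apply mul_le_mul_of_nonneg_left h1 hgt.le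
    have e2 : g t * (G T' * (T' - T)) ≤ G T' * G T' := by
      have : g t * (T' - T) ≤ G T' := le_trans
        (mul_le_mul_of_nonneg_right hgT' (by linarith)) h2
      nlinarith [hGT'pos]
    have e3 : g t * (∫ x in T'..t, G x) ≤ G t ^ 2 / 2 - G T' ^ 2 / 2 := by
      rw [← h4]; rw [mul_comm]; exact h3
    have := hsplit
    nlinarith [hGT'pos, hGT'lt]
  -- the combination
  have hD : deriv (deriv u) t * s t - deriv (deriv s) t
      = g t * (G t ^ 2 - H t * g t) / G t ^ 3 := by
    rw [hu2, hs2, hs' t ht]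
    field_simp
    ring
  have hDpos : 0 < deriv (deriv u) t * s t - deriv (deriv s) t := by
    rw [hD]
    exact div_pos (mul_pos hgt (by linarith)) (pow_pos (hGpos t ht) 3)
  refine ⟨hDpos, ?_⟩
  have hsub : G t ^ 2 - H t * g t ≠ 0 := (sub_pos.mpr K).ne'
  rw [hD, hseq t ht, hs' t ht, hu' t ht]
  have hexp : Real.exp (-Real.log (G t) - t) = Real.exp (-t) / G t := by
    rw [Real.exp_sub, Real.exp_neg, Real.exp_log (hGpos t ht), Real.exp_neg]
    field_simp
  rw [hexp]
  have hct : c t ≠ 0 := (hc_pos t ht).ne'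
  have hgexp : g t = c t * Real.exp (-t) := rfl
  rw [hgexp] at hsub ⊢
  have hE : Real.exp (-t) ≠ 0 := (Real.exp_pos _).ne'
  field_simp
  ring
end

section
/- Let $h : [T,+\infty) \to (0,R]$ (where $R = h(T)$) be the strictly decreasing continuous bijection $h(t) = \int_t^{+\infty} c(t_1)e^{-t_1}dt_1$ for a positive continuous $c$ with finite integral, and let $H : [T,+\infty) \to \mathbb{R}$ be nonincreasing with $H(T) < +\infty$ and $H \ge 0$. Suppose that for all $T \le t_0 < t_1$, $\frac{H(t_0) - H(t_1)}{h(t_0) - h(t_1)} \le \liminf_{B \to 0^+} \frac{H(t_1) - H(t_1 + B)}{h(t_1) - h(t_1+B)}$, and suppose $r \mapsto H(h^{-1}(r))$ is lower semicontinuous on $(0,R]$. Then $r \mapsto H(h^{-1}(r))$ is concave on $(0,R]$. -/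
/-!
With `G = H ∘ h⁻¹`, the hypothesis on `H` says that every chord slope of `G` starting at `r`
is at most the lower left Dini derivative of `G` at `r`; the change of variables `r = h t` is
harmless because `h` is a continuous strictly decreasing bijection of `[T, ∞)` onto `(0, h T]`.
If `G` failed to be concave there would be `x < y < z` and a slope `s` with
`slope G x y < s < slope G y z`. The lower semicontinuous function `G - s • id` attains its
minimum on `[x, z]` at an interior point `m`: all slopes of `G` from the left into `m` are then
at most `s`, while the chord slope from `m` to `z` exceeds `s`, a contradiction.
-/

open Set Filter Topology MeasureTheory

section TailIntegral

variable {f : ℝ → ℝ} {T : ℝ}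

theorem strictAntiOn_integral_Ioi (hf : IntegrableOn f (Ioi T)) (hpos : ∀ x ∈ Ioi T, 0 < f x) :
    StrictAntiOn (fun t => ∫ x in Ioi t, f x) (Ici T) := by
  intro a (ha : T ≤ a) b _ hab
  have hsplit := intervalIntegral.integral_Ioi_sub_Ioi (hf.mono_set (Ioi_subset_Ioi ha)) hab.le
  have hint : IntervalIntegrable f volume a b :=
    (intervalIntegrable_iff_integrableOn_Ioc_of_le hab.le).2
      (hf.mono_set (Ioc_subset_Ioi_self.trans (Ioi_subset_Ioi ha)))
  have hpos' : 0 < ∫ x in a..b, f x :=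
    intervalIntegral.intervalIntegral_pos_of_pos_on hint (fun x hx => hpos x (ha.trans_lt hx.1)) hab
  dsimp only
  linarith

theorem tendsto_integral_Ioi_atTop (hf : IntegrableOn f (Ioi T)) :
    Tendsto (fun t => ∫ x in Ioi t, f x) atTop (𝓝 0) := by
  have hempty : ⋂ t : ℝ, Ioi t = ∅ :=
    eq_empty_of_forall_notMem fun x hx => lt_irrefl x (mem_iInter.1 hx x)
  simpa [hempty] using tendsto_setIntegral_of_antitone (fun t => measurableSet_Ioi)
    (fun _ _ hab => Ioi_subset_Ioi hab) ⟨T, hf⟩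

end TailIntegral

theorem Ioc_zero_subset_image_Ici_of_tendsto {φ : ℝ → ℝ} {T : ℝ} (hφ : ContinuousOn φ (Ici T))
    (hlim : Tendsto φ atTop (𝓝 0)) : Ioc 0 (φ T) ⊆ φ '' Ici T := by
  intro r ⟨hr₀, hrT⟩
  obtain ⟨M, hMr, hTM⟩ := ((hlim.eventually_lt_const hr₀).and (eventually_ge_atTop T)).exists
  obtain ⟨t, ht, rfl⟩ := intermediate_value_Icc' hTM (hφ.mono Icc_subset_Ici_self) ⟨hMr.le, hrT⟩
  exact ⟨t, ht.1, rfl⟩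

theorem Filter.frequently_lt_of_lt_liminf_of_isBoundedUnder {α β : Type*}
    [ConditionallyCompleteLinearOrder β] {l : Filter α} [l.NeBot] {u : α → β} {b : β}
    (hu : IsBoundedUnder (· ≥ ·) l u) (h : b < liminf u l) : ∃ᶠ x in l, b < u x := by
  contrapose! h
  exact liminf_le_of_frequently_le h.frequently hu

theorem lt_slope_iff_sub_mul_lt {G : ℝ → ℝ} {a b s : ℝ} (hab : a < b) :
    s < slope G a b ↔ G a - s * a < G b - s * b := by
  rw [slope_def_field, lt_div_iff₀ (sub_pos.2 hab)]
  constructor <;> intro h <;> linarith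

theorem slope_lt_iff_sub_mul_lt {G : ℝ → ℝ} {a b s : ℝ} (hab : a < b) :
    slope G a b < s ↔ G b - s * b < G a - s * a := by
  rw [slope_def_field, div_lt_iff₀ (sub_pos.2 hab)]
  constructor <;> intro h <;> linarith

theorem concaveOn_of_frequently_lt_slope {S : Set ℝ} {G : ℝ → ℝ} (hS : Convex ℝ S)
    (hG : LowerSemicontinuousOn G S)
    (hslope : ∀ x ∈ S, ∀ y ∈ S, x < y → ∀ σ < slope G x y, ∃ᶠ z in 𝓝[<] x, σ < slope G z x) :
    ConcaveOn ℝ S G := by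
  refine concaveOn_iff_slope_anti_adjacent.2 ⟨hS, fun x y z hx hz hxy hyz => ?_⟩
  rw [← slope_def_field, ← slope_def_field]
  by_contra! hlt
  obtain ⟨s, hxy_s, hs_yz⟩ := exists_between hlt
  have hxz : Icc x z ⊆ S := hS.ordConnected.out hx hz
  have hφ : LowerSemicontinuousOn (fun w => G w - s * w) (Icc x z) := by
    have hline : Continuous fun w : ℝ => -(s * w) := by fun_prop
    simpa only [sub_eq_add_neg] using (hG.mono hxz).add hline.continuousOn.lowerSemicontinuousOn
  obtain ⟨m, hm, hmin⟩ := hφ.exists_isMinOn (nonempty_Icc.2 (hxy.trans hyz).le) isCompact_Icc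
  have hy_x : G y - s * y < G x - s * x := (slope_lt_iff_sub_mul_lt hxy).1 hxy_s
  have hy_z : G y - s * y < G z - s * z := (lt_slope_iff_sub_mul_lt hyz).1 hs_yz
  have hm_y : G m - s * m ≤ G y - s * y := hmin ⟨hxy.le, hyz.le⟩
  have hxm : x < m := hm.1.lt_of_ne (by rintro rfl; linarith)
  have hmz : m < z := hm.2.lt_of_ne (by rintro rfl; linarith)
  have hfreq := hslope m (hxz hm) z hz hmz s ((lt_slope_iff_sub_mul_lt hmz).2 (by linarith))
  have hle : ∀ᶠ w in 𝓝[<] m, slope G w m ≤ s := by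
    filter_upwards [Ico_mem_nhdsLT hxm] with w hw
    exact not_lt.1 fun hlt =>
      ((lt_slope_iff_sub_mul_lt hw.2).1 hlt).not_ge (hmin ⟨hw.1, hw.2.le.trans hmz.le⟩)
  exact hfreq (hle.mono fun _ hw => hw.not_gt)

theorem StrictAntiOn.tendsto_comp_add_nhdsGT {φ : ℝ → ℝ} {T t : ℝ}
    (hφ : StrictAntiOn φ (Ici T)) (hcont : ContinuousWithinAt φ (Ici T) t) (ht : T ≤ t) :
    Tendsto (fun B => φ (t + B)) (𝓝[>] 0) (𝓝[<] (φ t)) := by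
  have hshift : Tendsto (fun B => t + B) (𝓝[>] 0) (𝓝[Ici T] t) := by
    refine tendsto_nhdsWithin_iff.2 ⟨?_, ?_⟩
    · simpa using ((continuous_const_add t).tendsto 0).mono_left nhdsWithin_le_nhds
    · filter_upwards [self_mem_nhdsWithin] with B (hB : 0 < B)
      exact ht.trans (le_add_of_nonneg_right hB.le)
  refine tendsto_nhdsWithin_iff.2 ⟨hcont.tendsto.comp hshift, ?_⟩
  filter_upwards [self_mem_nhdsWithin] with B (hB : 0 < B)
  exact hφ ht (ht.trans (le_add_of_nonneg_right hB.le)) (lt_add_of_pos_right t hB)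

theorem frequently_lt_slope_of_lt_liminf {φ G H : ℝ → ℝ} {T t σ : ℝ}
    (hφ_cont : ContinuousOn φ (Ici T)) (hφ_anti : StrictAntiOn φ (Ici T))
    (hH : AntitoneOn H (Ici T)) (hGφ : ∀ s ∈ Ici T, G (φ s) = H s) (ht : T ≤ t)
    (hσ : σ < liminf (fun B => (H t - H (t + B)) / (φ t - φ (t + B))) (𝓝[>] 0)) :
    ∃ᶠ r in 𝓝[<] (φ t), σ < slope G r (φ t) := by
  have hshift : ∀ᶠ B in 𝓝[>] (0 : ℝ), t + B ∈ Ici T ∧ t < t + B := by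
    filter_upwards [self_mem_nhdsWithin] with B (hB : 0 < B)
    exact ⟨ht.trans (le_add_of_nonneg_right hB.le), lt_add_of_pos_right t hB⟩
  have hnonneg : IsBoundedUnder (· ≥ ·) (𝓝[>] 0)
      (fun B => (H t - H (t + B)) / (φ t - φ (t + B))) := by
    refine isBoundedUnder_of_eventually_ge (a := 0) ?_
    filter_upwards [hshift] with B ⟨hB, htB⟩
    exact div_nonneg (sub_nonneg.2 (hH ht hB htB.le)) (sub_nonneg.2 (hφ_anti ht hB htB).le)
  refine (hφ_anti.tendsto_comp_add_nhdsGT (hφ_cont t ht) ht).frequently ?_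
  refine (frequently_lt_of_lt_liminf_of_isBoundedUnder hnonneg hσ).mp ?_
  filter_upwards [hshift] with B ⟨hB, _⟩ hσB
  rwa [slope_def_field, hGφ t ht, hGφ _ hB]

theorem stmt13_general (T : ℝ) (c : ℝ → ℝ)
    (hc_pos : ∀ t ∈ Set.Ioi T, 0 < c t)
    (hc_int : MeasureTheory.IntegrableOn (fun t => c t * Real.exp (-t)) (Set.Ioi T))
    (h : ℝ → ℝ)
    (hh : ∀ t ∈ Set.Ici T, h t = ∫ t₁ in Set.Ioi t, c t₁ * Real.exp (-t₁))
    (hinv : ℝ → ℝ)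
    (hinv_on : Set.InvOn hinv h (Set.Ici T) (Set.Ioc 0 (h T)))
    (H : ℝ → ℝ)
    (hH_anti : AntitoneOn H (Set.Ici T))
    (hdiff : ∀ t₀ t₁, T ≤ t₀ → t₀ < t₁ →
      (H t₀ - H t₁) / (h t₀ - h t₁) ≤
        Filter.liminf (fun B => (H t₁ - H (t₁ + B)) / (h t₁ - h (t₁ + B)))
          (nhdsWithin 0 (Set.Ioi 0)))
    (hlsc : LowerSemicontinuousOn (fun r => H (hinv r)) (Set.Ioc 0 (h T))) :
    ConcaveOn ℝ (Set.Ioc 0 (h T)) (fun r => H (hinv r)) := by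
  have h_cont : ContinuousOn h (Ici T) := hc_int.continuousOn_Ici_primitive_Ioi.congr hh
  have h_anti : StrictAntiOn h (Ici T) :=
    (strictAntiOn_integral_Ioi hc_int fun t ht => mul_pos (hc_pos t ht) (Real.exp_pos _)).congr
      fun t ht => (hh t ht).symm
  have h_lim : Tendsto h atTop (𝓝 0) :=
    (tendsto_integral_Ioi_atTop hc_int).congr' <|
      (eventually_ge_atTop T).mono fun t ht => (hh t ht).symm
  have h_surj := Ioc_zero_subset_image_Ici_of_tendsto h_cont h_lim
  refine concaveOn_of_frequently_lt_slope (convex_Ioc 0 (h T)) hlsc ?_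
  rintro _ hr _ hr₀ hlt σ hσ
  obtain ⟨t, ht, rfl⟩ := h_surj hr
  obtain ⟨t₀, ht₀, rfl⟩ := h_surj hr₀
  have ht₀t : t₀ < t := (h_anti.lt_iff_gt ht ht₀).1 hlt
  refine frequently_lt_slope_of_lt_liminf h_cont h_anti hH_anti
    (fun s hs => congrArg H (hinv_on.1 hs)) ht (hσ.trans_le ?_)
  rw [slope_def_field, hinv_on.1 ht, hinv_on.1 ht₀]
  exact hdiff t₀ t ht₀ ht₀t

theorem stmt13 (T : ℝ) (c : ℝ → ℝ)
    (hc_cont : ContinuousOn c (Set.Ioi T))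
    (hc_pos : ∀ t ∈ Set.Ioi T, 0 < c t)
    (hc_int : MeasureTheory.IntegrableOn (fun t => c t * Real.exp (-t)) (Set.Ioi T))
    (h : ℝ → ℝ)
    (hh : ∀ t ∈ Set.Ici T, h t = ∫ t₁ in Set.Ioi t, c t₁ * Real.exp (-t₁))
    (hinv : ℝ → ℝ)
    (hinv_on : Set.InvOn hinv h (Set.Ici T) (Set.Ioc 0 (h T)))
    (H : ℝ → ℝ)
    (hH_anti : AntitoneOn H (Set.Ici T))
    (hH_nonneg : ∀ t ∈ Set.Ici T, 0 ≤ H t)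
    (hdiff : ∀ t₀ t₁, T ≤ t₀ → t₀ < t₁ →
      (H t₀ - H t₁) / (h t₀ - h t₁) ≤
        Filter.liminf (fun B => (H t₁ - H (t₁ + B)) / (h t₁ - h (t₁ + B)))
          (nhdsWithin 0 (Set.Ioi 0)))
    (hlsc : LowerSemicontinuousOn (fun r => H (hinv r)) (Set.Ioc 0 (h T))) :
    ConcaveOn ℝ (Set.Ioc 0 (h T)) (fun r => H (hinv r)) :=
  stmt13_general T c hc_pos hc_int h hh hinv hinv_on H hH_anti hdiff hlsc
end
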